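/- Let b ∈ ℝ and let U be an open subset of ℝ × (0,∞). Suppose u : ℝ × ℝ → ℝ is C¹ in its first variable and C² in its second variable on U and satisfies ∂u/∂τ = (1/2)∂²u/∂z² + (b/z)∂u/∂z on U. Then the function w(τ,z) := z^{2b−1}·u(τ,z) satisfies ∂w/∂τ = (1/2)∂²w/∂z² + ((1−b)/z)∂w/∂z on U. In particular, for b = m − 1/2 the transformed equation is the Bessel PDE with parameter (3−2m)/2. -/

import Mathlib

/-!
With `c = 2b − 1`, the Leibniz rule gives, for `w = z^c u`,
`½ w'' + (1 − b)/z · w' = z^c (½ u'' + b/z · u')`: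
the coefficient of `u'/z` is `c + (1 − b) = b`, and that of `u/z²` is
`c (c − 1)/2 + (1 − b) c = 0`. The time derivative commutes with the factor `z^c`.
-/

open Filter Topology

namespace Real

variable {f : ℝ → ℝ} {z c : ℝ}

theorem hasDerivAt_rpow_const_mul (hz : z ≠ 0) (hf : DifferentiableAt ℝ f z) :
    HasDerivAt (fun x => x ^ c * f x) (c * (z ^ c / z) * f z + z ^ c * deriv f z) z := by
  have h := (hasDerivAt_rpow_const (p := c) (Or.inl hz)).mul hf.hasDerivAt
  rwa [rpow_sub_one hz] at h

theorem deriv_deriv_rpow_const_mul (hz : z ≠ 0) (hf : ContDiffAt ℝ 2 f z) :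
    deriv (deriv fun x => x ^ c * f x) z
      = c * (c - 1) * (z ^ c / z / z) * f z + 2 * c * (z ^ c / z) * deriv f z
        + z ^ c * deriv (deriv f) z := by
  have hderiv : deriv (fun x => x ^ c * f x) =ᶠ[𝓝 z]
      fun x => c * (x ^ (c - 1) * f x) + x ^ c * deriv f x := by
    filter_upwards [isOpen_ne.mem_nhds hz, hf.eventually (by simp)] with x hx hfx
    rw [(hasDerivAt_rpow_const_mul hx (hfx.differentiableAt (by simp))).deriv, rpow_sub_one hx]
    ring
  have hf' : DifferentiableAt ℝ (deriv f) z :=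
    (hf.derivWithin (m := 1) (by norm_num)).differentiableAt one_ne_zero
  have h := ((hasDerivAt_rpow_const_mul (c := c - 1) hz (hf.differentiableAt (by simp))).const_mul
    c).add (hasDerivAt_rpow_const_mul (c := c) hz hf')
  rw [hderiv.deriv_eq]
  refine h.deriv.trans ?_
  rw [rpow_sub_one hz]
  ring

end Real

noncomputable def besselGenerator (b : ℝ) (f : ℝ → ℝ) (z : ℝ) : ℝ :=
  1 / 2 * deriv (deriv f) z + b / z * deriv f z

theorem besselGenerator_one_sub_rpow_mul {f : ℝ → ℝ} {z : ℝ} (b : ℝ) (hz : z ≠ 0)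
    (hf : ContDiffAt ℝ 2 f z) :
    besselGenerator (1 - b) (fun x => x ^ (2 * b - 1) * f x) z
      = z ^ (2 * b - 1) * besselGenerator b f z := by
  rw [besselGenerator, besselGenerator, Real.deriv_deriv_rpow_const_mul hz hf,
    (Real.hasDerivAt_rpow_const_mul hz (hf.differentiableAt (by simp))).deriv]
  field_simp
  ring

theorem bessel_pde_power_transform
    (b : ℝ) (U : Set (ℝ × ℝ))
    (hUpos : ∀ p ∈ U, 0 < p.2)
    (u : ℝ → ℝ → ℝ)
    (hsmooth : ∀ p ∈ U,
      ContDiffAt ℝ 1 (fun t => u t p.2) p.1 ∧ ContDiffAt ℝ 2 (fun z => u p.1 z) p.2)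
    (hPDE : ∀ p ∈ U,
      deriv (fun t => u t p.2) p.1
        = 1 / 2 * deriv (fun z => deriv (fun z' => u p.1 z') z) p.2
          + b / p.2 * deriv (fun z => u p.1 z) p.2)
    (w : ℝ → ℝ → ℝ)
    (hw : ∀ t z, w t z = z ^ (2 * b - 1) * u t z) :
    (∀ p ∈ U,
      deriv (fun t => w t p.2) p.1
        = 1 / 2 * deriv (fun z => deriv (fun z' => w p.1 z') z) p.2
          + (1 - b) / p.2 * deriv (fun z => w p.1 z) p.2)
    ∧ ∀ m : ℝ, b = m - 1 / 2 → 1 - b = (3 - 2 * m) / 2 := by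
  refine ⟨fun ⟨t, z⟩ hp => ?_, fun m hm => by rw [hm]; ring⟩
  have hw_eq : w = fun t x => x ^ (2 * b - 1) * u t x := funext₂ hw
  have hspace := besselGenerator_one_sub_rpow_mul b (hUpos _ hp).ne' (hsmooth _ hp).2
  subst hw_eq
  rw [deriv_const_mul_field, hPDE _ hp]
  exact hspace.symm
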